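/- Let V be an intuitionistic computability model. For every formula A(y,z₂,…,z_m), there is an m-ary V-function ψ such that for every evaluation f with domain M and all d₁,…,d_m ∈ M, ψ(d₁,…,d_m) is defined and realizes the instantiation axiom ∀y A(y,d₂,…,d_m) → A(d₁,d₂,…,d_m). -/

import Mathlib

namespace GenReal

/-- An `n`-ary partial number-theoretic function. -/
abbrev PFn (n : ℕ) := (Fin n → ℕ) → Part ℕ

/-- Combine a vector of partial values into a partial vector of values. -/
def vecPart {n : ℕ} (f : Fin n → Part ℕ) : Part (Fin n → ℕ) :=
  ⟨∀ i, (f i).Dom, fun h i => (f i).get (h i)⟩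

/-- A set `V` of partial number-theoretic functions presented by a numbering:
a pairing bijection `c` with unpairing functions `p1`, `p2`, index sets `Idx n ⊆ ℕ`
and for each arity `n` a numbering `e ↦ φ n e` of the `n`-ary `V`-functions. -/
structure Numbering where
  c : ℕ → ℕ → ℕ
  p1 : ℕ → ℕ
  p2 : ℕ → ℕ
  cBij : Function.Bijective fun p : ℕ × ℕ => c p.1 p.2
  p1c : ∀ a b, p1 (c a b) = a
  p2c : ∀ a b, p2 (c a b) = b
  Idx : ℕ → Set ℕ
  φ : (n : ℕ) → ℕ → PFn n

namespace Numbering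

variable (V : Numbering)

/-- `p` is an `n`-ary `V`-function, i.e. it has an index. -/
def IsV (n : ℕ) (p : PFn n) : Prop := ∃ e ∈ V.Idx n, ∀ x, V.φ n e x = p x

/-- (BF): projections, the pairing `c` and the unpairings `p1`, `p2` are `V`-functions. -/
def BF : Prop :=
  (∀ (n : ℕ) (i : Fin n), V.IsV n fun x => Part.some (x i)) ∧
  (V.IsV 2 fun x => Part.some (V.c (x 0) (x 1))) ∧
  (V.IsV 1 fun x => Part.some (V.p1 (x 0))) ∧
  (V.IsV 1 fun x => Part.some (V.p2 (x 0)))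

/-- (Cm): composition of `V`-functions is a `V`-function, with an index obtainable
by a `V`-function. -/
def Cm : Prop :=
  ∀ (n : ℕ) (m : Fin n → ℕ),
    ∃ s : PFn (n + 1), V.IsV (n + 1) s ∧
      ∀ e ∈ V.Idx n, ∀ es : Fin n → ℕ, (∀ i, es i ∈ V.Idx (m i)) →
        ∃ v, s (Fin.cons e es) = Part.some v ∧ v ∈ V.Idx (Finset.univ.sup m) ∧
          ∀ x : Fin (Finset.univ.sup m) → ℕ,
            V.φ (Finset.univ.sup m) v x =
              (vecPart fun i => V.φ (m i) (es i)
                  fun j => x (Fin.castLE (Finset.le_sup (Finset.mem_univ i)) j)).bind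
                (V.φ n e)

/-- (Cn): every constant (0-ary) function is a `V`-function with an index obtainable
by a `V`-function. -/
def Cn : Prop :=
  ∃ s : PFn 1, V.IsV 1 s ∧
    ∀ k : ℕ, ∃ v, s ![k] = Part.some v ∧ v ∈ V.Idx 0 ∧
      ∀ x : Fin 0 → ℕ, V.φ 0 v x = Part.some k

/-- (Cs): an index of a "conditional function" (case distinction on whether the last
argument is zero) can be obtained by a `V`-function. -/
def Cs : Prop :=
  ∀ n : ℕ, ∃ s : PFn 2, V.IsV 2 s ∧
    ∀ e₁ ∈ V.Idx n, ∀ e₂ ∈ V.Idx n,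
      ∃ v, s ![e₁, e₂] = Part.some v ∧ v ∈ V.Idx (n + 1) ∧
        ∀ x : Fin (n + 1) → ℕ,
          V.φ (n + 1) v x =
            if x (Fin.last n) = 0 then V.φ n e₁ (Fin.init x) else V.φ n e₂ (Fin.init x)

/-- `V` is a basic computability model. -/
def Basic : Prop := V.BF ∧ V.Cm ∧ V.Cn ∧ V.Cs

/-- `u` is overuniversal for the set of all `n`-ary `V`-functions. -/
def Overuniversal (n : ℕ) (u : PFn (n + 1)) : Prop :=
  ∀ e ∈ V.Idx n, ∀ a : Fin n → ℕ, (V.φ n e a).Dom → u (Fin.cons e a) = V.φ n e a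

/-- (U): there is an overuniversal `V`-function for the set of all unary `V`-functions. -/
def U : Prop := ∃ u : PFn 2, V.IsV 2 u ∧ V.Overuniversal 1 u

/-- `V` is an intuitionistic computability model. -/
def Intu : Prop := V.Basic ∧ V.U

end Numbering

end GenReal

namespace GenReal

/-- Formulas of the language of IPC (predicate symbols of every arity indexed by
naturals; terms are variables, indexed by naturals). -/
inductive Fml where
  | bot : Fml
  | top : Fml
  | pred (P : ℕ) (n : ℕ) (ts : Fin n → ℕ) : Fml
  | and (A B : Fml) : Fml
  | or (A B : Fml) : Fml
  | imp (A B : Fml) : Fml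
  | all (x : ℕ) (A : Fml) : Fml
  | ex (x : ℕ) (A : Fml) : Fml

namespace Fml

/-- Size of a formula (used as fuel for the realizability recursion). -/
def size : Fml → ℕ
  | bot => 1
  | top => 1
  | pred _ _ _ => 1
  | and A B => A.size + B.size + 1
  | or A B => A.size + B.size + 1
  | imp A B => A.size + B.size + 1
  | all _ A => A.size + 1
  | ex _ A => A.size + 1

/-- Strip the maximal prefix of universal quantifiers. -/
def strip : Fml → List ℕ × Fml
  | all x A => (x :: (strip A).1, (strip A).2)
  | A => ([], A)

end Fml

/-- `x` occurs free in a formula. -/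
def FreeIn (x : ℕ) : Fml → Prop
  | Fml.bot => False
  | Fml.top => False
  | Fml.pred _ _ ts => ∃ i, ts i = x
  | Fml.and A B => FreeIn x A ∨ FreeIn x B
  | Fml.or A B => FreeIn x A ∨ FreeIn x B
  | Fml.imp A B => FreeIn x A ∨ FreeIn x B
  | Fml.all z A => x ≠ z ∧ FreeIn x A
  | Fml.ex z A => x ≠ z ∧ FreeIn x A

/-- A sentence: a formula with no free variables. -/
def Fml.Closed (A : Fml) : Prop := ∀ x, ¬ FreeIn x A

/-- An evaluation: each `n`-ary predicate symbol gets a generalized predicate,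
i.e. a map from `n`-tuples to sets of natural numbers. -/
abbrev Eval := ℕ → (n : ℕ) → (Fin n → ℕ) → Set ℕ

/-- Update an environment at a list of variables by a list of values
(later, i.e. inner, updates override earlier ones). -/
def updEnv : (ℕ → ℕ) → List ℕ → List ℕ → (ℕ → ℕ)
  | ρ, x :: xs, a :: as => updEnv (Function.update ρ x a) xs as
  | ρ, _, _ => ρ

/-- Fueled definition of `V`-realizability of a formula over an evaluation `f`
with domain `M`, relative to an environment `ρ` assigning elements of `M`
to the variables. -/
def RzF (V : Numbering) (M : Set ℕ) (f : Eval) : ℕ → Fml → (ℕ → ℕ) → ℕ → Prop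
  | 0, _, _, _ => False
  | _ + 1, Fml.bot, _, _ => False
  | _ + 1, Fml.top, _, _ => True
  | _ + 1, Fml.pred P n ts, ρ, e => e ∈ f P n fun i => ρ (ts i)
  | k + 1, Fml.and A B, ρ, e => RzF V M f k A ρ (V.p1 e) ∧ RzF V M f k B ρ (V.p2 e)
  | k + 1, Fml.or A B, ρ, e =>
      (V.p1 e = 0 ∧ RzF V M f k A ρ (V.p2 e)) ∨ (V.p1 e = 1 ∧ RzF V M f k B ρ (V.p2 e))
  | k + 1, Fml.imp A B, ρ, e =>
      e ∈ V.Idx 1 ∧ ∀ s : ℕ, RzF V M f k A ρ s →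
        ∃ v, V.φ 1 e ![s] = Part.some v ∧ RzF V M f k B ρ v
  | k + 1, Fml.ex x A, ρ, e =>
      V.p1 e ∈ M ∧ RzF V M f k A (Function.update ρ x (V.p1 e)) (V.p2 e)
  | k + 1, Fml.all x A, ρ, e =>
      match Fml.strip A with
      | (ys, Fml.imp B C) =>
          e ∈ V.Idx ((x :: ys).length + 1) ∧
            ∀ a : Fin (x :: ys).length → ℕ, (∀ i, a i ∈ M) → ∀ s : ℕ,
              RzF V M f k B (updEnv ρ (x :: ys) (List.ofFn a)) s →
                ∃ v, V.φ ((x :: ys).length + 1) e (Fin.snoc a s) = Part.some v ∧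
                  RzF V M f k C (updEnv ρ (x :: ys) (List.ofFn a)) v
      | (ys, D) =>
          e ∈ V.Idx ((x :: ys).length + 1) ∧
            ∀ a : Fin (x :: ys).length → ℕ, (∀ i, a i ∈ M) → ∀ s : ℕ,
              ∃ v, V.φ ((x :: ys).length + 1) e (Fin.snoc a s) = Part.some v ∧
                RzF V M f k D (updEnv ρ (x :: ys) (List.ofFn a)) v

/-- `e` `V`-realizes the formula `A` on the evaluation `f` with domain `M`,
relative to the environment `ρ`. -/
def Rz (V : Numbering) (M : Set ℕ) (f : Eval) (A : Fml) (ρ : ℕ → ℕ) (e : ℕ) : Prop :=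
  RzF V M f (A.size + 1) A ρ e

end GenReal
namespace GenReal
set_option linter.dupNamespace false
open Numbering

lemma fml_size_pos (A : Fml) : 1 ≤ A.size := by cases A <;> simp [Fml.size]

lemma strip_snd_size (A : Fml) : (Fml.strip A).2.size ≤ A.size := by
  induction A <;> simp_all [Fml.strip, Fml.size] <;> omega

lemma rzF_all_imp (V : Numbering) (M : Set ℕ) (f : Eval) (k x : ℕ) (A : Fml)
    (ys : List ℕ) (B C : Fml) (h : A.strip = (ys, Fml.imp B C)) (ρ : ℕ → ℕ) (e : ℕ) :
    RzF V M f (k+1) (.all x A) ρ e ↔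
      (e ∈ V.Idx ((x :: ys).length + 1) ∧
        ∀ a : Fin (x :: ys).length → ℕ, (∀ i, a i ∈ M) → ∀ s : ℕ,
          RzF V M f k B (updEnv ρ (x :: ys) (List.ofFn a)) s →
            ∃ v, V.φ ((x :: ys).length + 1) e (Fin.snoc a s) = Part.some v ∧
              RzF V M f k C (updEnv ρ (x :: ys) (List.ofFn a)) v) := by
  simp only [RzF]
  rw [h]

lemma rzF_all_notimp (V : Numbering) (M : Set ℕ) (f : Eval) (k x : ℕ) (A : Fml)
    (ys : List ℕ) (D : Fml) (h : A.strip = (ys, D)) (hD : ∀ B C, D ≠ Fml.imp B C)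
    (ρ : ℕ → ℕ) (e : ℕ) :
    RzF V M f (k+1) (.all x A) ρ e ↔
      (e ∈ V.Idx ((x :: ys).length + 1) ∧
        ∀ a : Fin (x :: ys).length → ℕ, (∀ i, a i ∈ M) → ∀ s : ℕ,
          ∃ v, V.φ ((x :: ys).length + 1) e (Fin.snoc a s) = Part.some v ∧
            RzF V M f k D (updEnv ρ (x :: ys) (List.ofFn a)) v) := by
  simp only [RzF]
  rw [h]
  cases D with
  | imp B C => exact absurd rfl (hD B C)
  | _ => exact Iff.rfl

lemma rzF_imp (V : Numbering) (M : Set ℕ) (f : Eval) (k : ℕ) (B C : Fml)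
    (ρ : ℕ → ℕ) (e : ℕ) :
    RzF V M f (k+1) (.imp B C) ρ e ↔
      (e ∈ V.Idx 1 ∧ ∀ s : ℕ, RzF V M f k B ρ s →
        ∃ w, V.φ 1 e ![s] = Part.some w ∧ RzF V M f k C ρ w) := by
  simp only [RzF]
lemma rzF_stable (V : Numbering) (M : Set ℕ) (f : Eval) :
    ∀ (n : ℕ) (A : Fml), A.size ≤ n → ∀ (k k' : ℕ), A.size ≤ k → A.size ≤ k' →
      ∀ (ρ : ℕ → ℕ) (e : ℕ), (RzF V M f k A ρ e ↔ RzF V M f k' A ρ e) := by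
  intro n
  induction n with
  | zero => intro A hA; have := fml_size_pos A; omega
  | succ n IH =>
    intro A hA k k' hk hk' ρ e
    have h1 := fml_size_pos A
    obtain ⟨k, rfl⟩ : ∃ j, k = j + 1 := ⟨k - 1, by omega⟩
    obtain ⟨k', rfl⟩ : ∃ j, k' = j + 1 := ⟨k' - 1, by omega⟩
    cases A with
    | bot => simp [RzF]
    | top => simp [RzF]
    | pred P nn ts => simp [RzF]
    | and B C =>
      simp only [RzF]
      simp only [Fml.size] at hA hk hk'
      exact and_congr (IH B (by omega) k k' (by omega) (by omega) ρ _)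
        (IH C (by omega) k k' (by omega) (by omega) ρ _)
    | or B C =>
      simp only [RzF]
      simp only [Fml.size] at hA hk hk'
      exact or_congr
        (and_congr Iff.rfl (IH B (by omega) k k' (by omega) (by omega) ρ _))
        (and_congr Iff.rfl (IH C (by omega) k k' (by omega) (by omega) ρ _))
    | imp B C =>
      simp only [RzF]
      simp only [Fml.size] at hA hk hk'
      refine and_congr Iff.rfl (forall_congr' fun s => imp_congr
        (IH B (by omega) k k' (by omega) (by omega) ρ s)
        (exists_congr fun w => and_congr Iff.rfl
          (IH C (by omega) k k' (by omega) (by omega) ρ w)))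
    | ex x B =>
      simp only [RzF]
      simp only [Fml.size] at hA hk hk'
      exact and_congr Iff.rfl (IH B (by omega) k k' (by omega) (by omega) _ _)
    | all x B =>
      simp only [Fml.size] at hA hk hk'
      have hs := strip_snd_size B
      rcases hst : B.strip with ⟨ys, D⟩
      rw [hst] at hs
      cases D with
      | imp P Q =>
        simp only [Fml.size] at hs
        rw [rzF_all_imp V M f k x B ys P Q hst, rzF_all_imp V M f k' x B ys P Q hst]
        refine and_congr Iff.rfl (forall_congr' fun a => imp_congr Iff.rfl
          (forall_congr' fun s => imp_congr
            (IH P (by omega) k k' (by omega) (by omega) _ s)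
            (exists_congr fun w => and_congr Iff.rfl
              (IH Q (by omega) k k' (by omega) (by omega) _ w))))
      | _ =>
        rw [rzF_all_notimp V M f k x B ys _ hst (by intro B C h; cases h),
            rzF_all_notimp V M f k' x B ys _ hst (by intro B C h; cases h)]
        refine and_congr Iff.rfl (forall_congr' fun a => imp_congr Iff.rfl
          (forall_congr' fun s => exists_congr fun w => and_congr Iff.rfl
            (IH _ (by simp only [Fml.size] at hs ⊢; omega) k k'
              (by simp only [Fml.size] at hs ⊢; omega)
              (by simp only [Fml.size] at hs ⊢; omega) _ w)))
lemma vecPart_eq_some {n : ℕ} {g : Fin n → Part ℕ} {h : Fin n → ℕ}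
    (H : ∀ i, g i = Part.some (h i)) : vecPart g = Part.some h := by
  have hd : ∀ i, (g i).Dom := fun i => by rw [H i]; trivial
  refine Part.eq_some_iff.mpr ⟨hd, funext fun i => ?_⟩
  have : h i ∈ g i := by rw [H i]; exact Part.mem_some _
  exact Part.get_eq_of_mem this (hd i)

lemma sup_eq {n N : ℕ} (m : Fin n → ℕ) (i₀ : Fin n) (h₀ : m i₀ = N)
    (h : ∀ i, m i ≤ N) : Finset.univ.sup m = N :=
  le_antisymm (Finset.sup_le fun i _ => h i) (h₀ ▸ Finset.le_sup (Finset.mem_univ i₀))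

lemma fin1_eq_matrix (g : Fin 1 → ℕ) : g = ![g 0] :=
  funext fun i => by rw [Subsingleton.elim i 0]; rfl

lemma Numbering.cm' {V : Numbering} (hCm : V.Cm) {n N : ℕ} (m : Fin n → ℕ)
    (hsup : Finset.univ.sup m = N) (hle : ∀ i, m i ≤ N) :
    ∃ s : PFn (n + 1), V.IsV (n + 1) s ∧
      ∀ e ∈ V.Idx n, ∀ es : Fin n → ℕ, (∀ i, es i ∈ V.Idx (m i)) →
        ∃ v, s (Fin.cons e es) = Part.some v ∧ v ∈ V.Idx N ∧
          ∀ x : Fin N → ℕ,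
            V.φ N v x =
              (vecPart fun i => V.φ (m i) (es i)
                  fun j => x (Fin.castLE (hle i) j)).bind (V.φ n e) := by
  subst hsup
  exact hCm n m
lemma strip_eq_self (A : Fml) (h1 : ∀ x B, A ≠ Fml.all x B) : A.strip = ([], A) := by
  cases A <;> first | rfl | exact absurd rfl (h1 _ _)

lemma fin1_app {α : Type*} (g : Fin 1 → α) (j : Fin 1) : g j = g 0 := by
  rw [Subsingleton.elim j 0]

lemma fin1_funext {α : Type*} (g h : Fin 1 → α) (H : g 0 = h 0) : g = h :=
  funext fun j => by rw [Subsingleton.elim j (0 : Fin 1)]; exact H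

lemma cons_le {n N x : ℕ} {p : Fin n → ℕ} (hx : x ≤ N) (hp : ∀ i, p i ≤ N) :
    ∀ i, (Fin.cons x p : Fin (n+1) → ℕ) i ≤ N := by
  intro i
  refine Fin.cases ?_ ?_ i
  exacts [hx, hp]

theorem stmt14' (V : Numbering) (hV : V.Intu) (m : ℕ) (hm : 0 < m)
    (v : Fin m → ℕ) (hinj : Function.Injective v) (A : Fml)
    (hfvA : ∀ x, FreeIn x A → ∃ i, v i = x) :
    ∃ ψ : PFn m, V.IsV m ψ ∧
      ∀ (M : Set ℕ), M.Nonempty → ∀ (f : Eval) (ρ : ℕ → ℕ), (∀ x, ρ x ∈ M) →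
        ∃ w, ψ (fun i => ρ (v i)) = Part.some w ∧
          Rz V M f ((Fml.all (v ⟨0, hm⟩) A).imp A) ρ w := by
  classical
  obtain ⟨⟨hBF, hCm, hCn, hCs⟩, hU⟩ := hV
  obtain ⟨u, ⟨eu, heu, hφu⟩, hOver⟩ := hU
  obtain ⟨cn, ⟨ecn, hecn, hφcn⟩, hcnval⟩ := hCn
  choose cnv hcne hcnIdx hφcnv using hcnval
  choose ep hepIdx hφep using hBF.1
  set y := v ⟨0, hm⟩ with hy
  rcases hst : A.strip with ⟨ys, D⟩
  -- Level 1 : from an index s of an (ys.length+2)-ary function and a parameter d,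
  -- an index of the (ys.length+1)-ary function x ↦ φ s (d ::ᵥ x)
  obtain ⟨s₁, hs₁V, hs₁⟩ := Numbering.cm' hCm
    (n := ys.length + 2) (N := ys.length + 1)
    (Fin.cons 0 (fun _ : Fin (ys.length + 1) => ys.length + 1))
    (sup_eq _ (Fin.succ 0) (by rw [Fin.cons_succ]) (cons_le (by omega) (fun _ => le_rfl)))
    (cons_le (by omega) (fun _ => le_rfl))
  obtain ⟨e₁, he₁, hφ₁⟩ := hs₁V
  have hKey : ∀ d s : ℕ, s ∈ V.Idx (ys.length + 2) →
      ∃ K, s₁ (Fin.cons s (Fin.cons (cnv d) (ep (ys.length + 1)))) = Part.some K ∧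
        K ∈ V.Idx (ys.length + 1) ∧
        ∀ x : Fin (ys.length + 1) → ℕ,
          V.φ (ys.length + 1) K x = V.φ (ys.length + 2) s (Fin.cons d x) := by
    intro d s hs
    obtain ⟨K, h1, h2, h3⟩ := hs₁ s hs (Fin.cons (cnv d) (ep (ys.length + 1)))
      (fun i => by
        refine Fin.cases ?_ (fun j => ?_) i
        · simpa using hcnIdx d
        · simpa using hepIdx (ys.length + 1) j)
    refine ⟨K, h1, h2, fun x => ?_⟩
    rw [h3 x, vecPart_eq_some (h := Fin.cons d x) (fun i => ?_), Part.bind_some]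
    refine Fin.cases ?_ (fun j => ?_) i
    · exact hφcnv d _
    · exact (hφep _ j _).trans (congrArg Part.some (congrArg x (Fin.ext rfl)))
  -- Level 2 : for each d, an index `W d` of the unary map s ↦ s₁ (s ::ᵥ cnv d ::ᵥ ep …)
  obtain ⟨s₂, hs₂V, hs₂⟩ := Numbering.cm' hCm
    (n := ys.length + 3) (N := 1)
    (Fin.cons 1 (fun _ : Fin (ys.length + 2) => 0))
    (sup_eq _ 0 (Fin.cons_zero _ _) (cons_le le_rfl (fun _ => by omega)))
    (cons_le le_rfl (fun _ => by omega))
  obtain ⟨e₂, he₂, hφ₂⟩ := hs₂V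
  have hW0 : ∀ d : ℕ, ∃ w, s₂ (Fin.cons e₁
      (Fin.cons (ep 1 0) (Fin.cons (cnv (cnv d)) (fun i => cnv (ep (ys.length + 1) i))))) =
        Part.some w ∧ w ∈ V.Idx 1 ∧ ∀ s : ℕ,
          V.φ 1 w ![s] = s₁ (Fin.cons s (Fin.cons (cnv d) (ep (ys.length + 1)))) := by
    intro d
    obtain ⟨w, h1, h2, h3⟩ := hs₂ e₁ he₁
      (Fin.cons (ep 1 0) (Fin.cons (cnv (cnv d)) (fun i => cnv (ep (ys.length + 1) i))))
      (fun i => by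
        refine Fin.cases ?_ (fun j => ?_) i
        · simpa using hepIdx 1 0
        · refine Fin.cases ?_ (fun j' => ?_) j <;> simp [hcnIdx])
    refine ⟨w, h1, h2, fun s => ?_⟩
    rw [h3 ![s], vecPart_eq_some
      (h := Fin.cons s (Fin.cons (cnv d) (ep (ys.length + 1)))) (fun i => ?_),
      Part.bind_some, hφ₁]
    refine Fin.cases ?_ (fun j => ?_) i
    · exact (hφep 1 0 _).trans (congrArg Part.some
        ((fin1_app _ _).trans (Matrix.cons_val_zero s _)))
    · refine Fin.cases ?_ (fun j' => ?_) j <;> exact hφcnv _ _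
  choose W hWeq hWIdx hφW using hW0
  -- Level 3 : for each d, an index `WB d` of the unary map s ↦ u (W d applied to s, 0)
  obtain ⟨s₃, hs₃V, hs₃⟩ := Numbering.cm' hCm
    (n := 2) (N := 1)
    (Fin.cons 1 (fun _ : Fin 1 => 0))
    (sup_eq _ 0 (Fin.cons_zero _ _) (cons_le le_rfl (fun _ => by omega)))
    (cons_le le_rfl (fun _ => by omega))
  obtain ⟨e₃, he₃, hφ₃⟩ := hs₃V
  have hWB0 : ∀ d : ℕ, ∃ w, s₃ (Fin.cons eu
      (Fin.cons (W d) (fun _ => cnv 0))) = Part.some w ∧ w ∈ V.Idx 1 ∧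
        ∀ s K : ℕ, V.φ 1 (W d) ![s] = Part.some K →
          V.φ 1 w ![s] = u (Fin.cons K (fun _ => 0)) := by
    intro d
    obtain ⟨w, h1, h2, h3⟩ := hs₃ eu heu (Fin.cons (W d) (fun _ => cnv 0))
      (fun i => by
        refine Fin.cases ?_ (fun j => ?_) i
        · simpa using hWIdx d
        · simpa using hcnIdx 0)
    refine ⟨w, h1, h2, fun s K hK => ?_⟩
    rw [h3 ![s], vecPart_eq_some (h := Fin.cons K (fun _ => 0)) (fun i => ?_),
      Part.bind_some, hφu]
    refine Fin.cases ?_ (fun j => ?_) i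
    · exact (congrArg (V.φ 1 (W d)) (fin1_funext _ ![s] (fin1_app _ _))).trans hK
    · exact hφcnv 0 _
  choose WB hWBeq hWBIdx hφWB using hWB0
  -- index of cnv ∘ cnv
  obtain ⟨scc, hsccV, hscc⟩ := Numbering.cm' hCm
    (n := 1) (N := 1) (fun _ : Fin 1 => 1)
    (sup_eq _ 0 rfl (fun i => le_refl 1)) (fun i => le_refl 1)
  obtain ⟨vcc, hvcceq, hvccIdx, hφvcc'⟩ := hscc ecn hecn (fun _ => ecn) (fun i => hecn)
  have hφvcc : ∀ d : ℕ, V.φ 1 vcc ![d] = Part.some (cnv (cnv d)) := by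
    intro d
    rw [hφvcc' ![d], vecPart_eq_some (h := fun _ => cnv d) (fun i => ?_), Part.bind_some]
    · exact (hφcn _).trans ((congrArg cn (fin1_funext (fun _ => cnv d) ![cnv d] rfl)).trans (hcne (cnv d)))
    · exact (hφcn _).trans ((congrArg cn (fin1_funext _ ![d] (fin1_app _ _))).trans (hcne d))
  -- Level 4 : an index vA of the unary map d ↦ W d
  obtain ⟨s₄, hs₄V, hs₄⟩ := Numbering.cm' hCm
    (n := ys.length + 4) (N := 1)
    (Fin.cons 0 (Fin.cons 0 (Fin.cons 1 (fun _ : Fin (ys.length + 1) => 0))))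
    (sup_eq _ (Fin.succ (Fin.succ 0))
      (by rw [Fin.cons_succ, Fin.cons_succ, Fin.cons_zero])
      (cons_le (by omega) (cons_le (by omega) (cons_le le_rfl (fun _ => by omega)))))
    (cons_le (by omega) (cons_le (by omega) (cons_le le_rfl (fun _ => by omega))))
  obtain ⟨vA, hvAeq, hvAIdx, hφvA'⟩ := hs₄ e₂ he₂
    (Fin.cons (cnv e₁) (Fin.cons (cnv (ep 1 0)) (Fin.cons vcc
      (fun i => cnv (cnv (ep (ys.length + 1) i))))))
    (fun i => by
      refine Fin.cases ?_ (fun j => ?_) i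
      · simpa using hcnIdx e₁
      · refine Fin.cases ?_ (fun j' => ?_) j
        · simpa using hcnIdx (ep 1 0)
        · refine Fin.cases ?_ (fun j'' => ?_) j'
          · exact hvccIdx
          · simpa using hcnIdx _)
  have hφvA : ∀ d : ℕ, V.φ 1 vA ![d] = Part.some (W d) := by
    intro d
    rw [hφvA' ![d], vecPart_eq_some (h := Fin.cons e₁
      (Fin.cons (ep 1 0) (Fin.cons (cnv (cnv d)) (fun i => cnv (ep (ys.length + 1) i)))))
      (fun i => ?_), Part.bind_some, hφ₂, hWeq]
    refine Fin.cases ?_ (fun j => ?_) i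
    · exact hφcnv e₁ _
    · refine Fin.cases ?_ (fun j' => ?_) j
      · exact hφcnv (ep 1 0) _
      · refine Fin.cases ?_ (fun j'' => ?_) j'
        · exact (congrArg (V.φ 1 vcc) (fin1_funext _ ![d] (fin1_app _ _))).trans (hφvcc d)
        · exact hφcnv _ _
  -- Level 4B : an index vB of the unary map d ↦ WB d
  obtain ⟨s₅, hs₅V, hs₅⟩ := Numbering.cm' hCm
    (n := 3) (N := 1)
    (Fin.cons 0 (Fin.cons 1 (fun _ : Fin 1 => 0)))
    (sup_eq _ (Fin.succ 0) (by rw [Fin.cons_succ, Fin.cons_zero])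
      (cons_le (by omega) (cons_le le_rfl (fun _ => by omega))))
    (cons_le (by omega) (cons_le le_rfl (fun _ => by omega)))
  obtain ⟨vB, hvBeq, hvBIdx, hφvB'⟩ := hs₅ e₃ he₃
    (Fin.cons (cnv eu) (Fin.cons vA (fun _ => cnv (cnv 0))))
    (fun i => by
      refine Fin.cases ?_ (fun j => ?_) i
      · simpa using hcnIdx eu
      · refine Fin.cases ?_ (fun j' => ?_) j
        · simpa using hvAIdx
        · simpa using hcnIdx _)
  have hφvB : ∀ d : ℕ, V.φ 1 vB ![d] = Part.some (WB d) := by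
    intro d
    rw [hφvB' ![d], vecPart_eq_some (h := Fin.cons eu
      (Fin.cons (W d) (fun _ => cnv 0))) (fun i => ?_), Part.bind_some, hφ₃, hWBeq]
    refine Fin.cases ?_ (fun j => ?_) i
    · exact hφcnv eu _
    · refine Fin.cases ?_ (fun j' => ?_) j
      · exact (congrArg (V.φ 1 vA) (fin1_funext _ ![d] (fin1_app _ _))).trans (hφvA d)
      · exact hφcnv _ _
  -- Level 5 : make everything m-ary
  obtain ⟨s₆, hs₆V, hs₆⟩ := Numbering.cm' hCm
    (n := 1) (N := m) (fun _ : Fin 1 => m)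
    (sup_eq _ 0 rfl (fun i => le_refl m)) (fun i => le_refl m)
  have hψ : ∀ vv : ℕ, vv ∈ V.Idx 1 →
      ∃ vψ, vψ ∈ V.Idx m ∧ ∀ x : Fin m → ℕ,
        V.φ m vψ x = V.φ 1 vv ![x ⟨0, hm⟩] := by
    intro vv hvv
    obtain ⟨vψ, h1, h2, h3⟩ := hs₆ vv hvv (fun _ => ep m ⟨0, hm⟩) (fun i => hepIdx m _)
    refine ⟨vψ, h2, fun x => ?_⟩
    rw [h3 x, vecPart_eq_some (h := fun _ => x ⟨0, hm⟩) (fun i => ?_), Part.bind_some]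
    · exact congrArg (V.φ 1 vv) (fin1_funext (fun _ => x ⟨0, hm⟩) ![x ⟨0, hm⟩] rfl)
    · exact (hφep m ⟨0, hm⟩ _).trans (congrArg Part.some (congrArg x (Fin.ext rfl)))
  have hvec2 : ∀ (d : ℕ) (g : Fin 1 → ℕ),
      (Fin.cons d g : Fin 2 → ℕ) = Fin.snoc (fun _ : Fin 1 => d) (g 0) := by
    intro d g
    funext i
    refine Fin.cases ?_ (fun j => ?_) i
    · simp [Fin.snoc]
    · rw [Subsingleton.elim j 0]
      simp [Fin.snoc]
  have henv : ∀ (ρ : ℕ → ℕ) (z k : ℕ) (a : Fin k → ℕ) (zs : List ℕ),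
      updEnv ρ (z :: zs) (List.ofFn (Fin.cons (ρ z) a)) = updEnv ρ zs (List.ofFn a) := by
    intro ρ z k a zs
    rw [List.ofFn_succ]
    simp only [Fin.cons_zero, Fin.cons_succ]
    show updEnv (Function.update ρ z (ρ z)) zs (List.ofFn a) = updEnv ρ zs (List.ofFn a)
    rw [Function.update_eq_self]
  by_cases hAcase : (∃ x B, A = Fml.all x B) ∨ (∃ B C, A = Fml.imp B C)
  · obtain ⟨vψ, hvψIdx, hφvψ⟩ := hψ vA hvAIdx
    refine ⟨V.φ m vψ, ⟨vψ, hvψIdx, fun _ => rfl⟩,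
      fun M hM f ρ hρ => ⟨W (ρ y), (hφvψ _).trans (hφvA (ρ y)), ?_⟩⟩
    unfold Rz
    simp only [Fml.size]
    rw [rzF_imp]
    refine ⟨hWIdx (ρ y), fun s hs => ?_⟩
    rcases hAcase with ⟨y₁, A₁, rfl⟩ | ⟨B, C, rfl⟩
    · -- A = all y₁ A₁
      rcases hst1 : A₁.strip with ⟨ys₁, D₁⟩
      have hstA : (Fml.all y₁ A₁).strip = (y₁ :: ys₁, D₁) := by
        show (y₁ :: A₁.strip.1, A₁.strip.2) = _
        rw [hst1]
      rw [hstA] at hst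
      injection hst with h1 h2
      subst h1
      subst h2
      cases D₁ with
      | imp B C =>
        rw [rzF_all_imp V M f _ y (Fml.all y₁ A₁) (y₁ :: ys₁) B C hstA] at hs
        obtain ⟨K, hKeq, hKIdx, hφK⟩ := hKey (ρ y) s hs.1
        refine ⟨K, (hφW (ρ y) s).trans hKeq, ?_⟩
        rw [rzF_all_imp V M f _ y₁ A₁ ys₁ B C hst1]
        refine ⟨hKIdx, fun a ha s' hs' => ?_⟩
        obtain ⟨w', hw'eq, hw'C⟩ := hs.2 (Fin.cons (ρ y) a)
          (fun i => Fin.cases (hρ y) ha i) s'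
          (by rw [henv ρ y _ a (y₁ :: ys₁)]; exact hs')
        rw [henv ρ y _ a (y₁ :: ys₁)] at hw'C
        refine ⟨w', ?_, hw'C⟩
        rw [hφK]
        refine Eq.trans ?_ hw'eq
        congr 1
        exact Fin.cons_snoc_eq_snoc_cons _ _ _
      | _ =>
        rw [rzF_all_notimp V M f _ y (Fml.all y₁ A₁) (y₁ :: ys₁) _ hstA (by nofun)] at hs
        obtain ⟨K, hKeq, hKIdx, hφK⟩ := hKey (ρ y) s hs.1
        refine ⟨K, (hφW (ρ y) s).trans hKeq, ?_⟩
        rw [rzF_all_notimp V M f _ y₁ A₁ ys₁ _ hst1 (by nofun)]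
        refine ⟨hKIdx, fun a ha s' => ?_⟩
        obtain ⟨w', hw'eq, hw'C⟩ := hs.2 (Fin.cons (ρ y) a)
          (fun i => Fin.cases (hρ y) ha i) s'
        rw [henv ρ y _ a (y₁ :: ys₁)] at hw'C
        refine ⟨w', ?_, hw'C⟩
        rw [hφK]
        refine Eq.trans ?_ hw'eq
        congr 1
        exact Fin.cons_snoc_eq_snoc_cons _ _ _
    · -- A = imp B C
      have hstA : (Fml.imp B C).strip = ([], Fml.imp B C) := rfl
      rw [hstA] at hst
      injection hst with h1 h2
      subst h1
      subst h2
      rw [rzF_all_imp V M f _ y (Fml.imp B C) [] B C hstA] at hs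
      obtain ⟨K, hKeq, hKIdx, hφK⟩ := hKey (ρ y) s hs.1
      refine ⟨K, (hφW (ρ y) s).trans hKeq, ?_⟩
      rw [rzF_imp]
      refine ⟨hKIdx, fun s' hs' => ?_⟩
      have henv0 : updEnv ρ [y] (List.ofFn (fun _ : Fin 1 => ρ y)) = ρ := by
        rw [fin1_funext (fun _ : Fin 1 => ρ y) (Fin.cons (ρ y) (fun _ : Fin 0 => 0)) rfl,
          henv ρ y 0 (fun _ : Fin 0 => 0) []]
        rfl
      obtain ⟨w', hw'eq, hw'C⟩ := hs.2 (fun _ : Fin 1 => ρ y) (fun _ => hρ y) s'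
        (by rw [henv0]; exact hs')
      rw [henv0] at hw'C
      exact ⟨w', (hφK ![s']).trans
        ((congrArg (V.φ _ s) (hvec2 (ρ y) ![s'])).trans hw'eq), hw'C⟩
  · -- A is neither a universal formula nor an implication
    have hnotall : ∀ x B, A ≠ Fml.all x B := fun x B h => hAcase (Or.inl ⟨x, B, h⟩)
    have hnotimp : ∀ B C, A ≠ Fml.imp B C := fun B C h => hAcase (Or.inr ⟨B, C, h⟩)
    have hstA : A.strip = ([], A) := strip_eq_self A hnotall
    rw [hstA] at hst
    injection hst with h1 h2
    subst h1
    subst h2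
    obtain ⟨vψ, hvψIdx, hφvψ⟩ := hψ vB hvBIdx
    refine ⟨V.φ m vψ, ⟨vψ, hvψIdx, fun _ => rfl⟩,
      fun M hM f ρ hρ => ⟨WB (ρ y), (hφvψ _).trans (hφvB (ρ y)), ?_⟩⟩
    unfold Rz
    simp only [Fml.size]
    rw [rzF_imp]
    refine ⟨hWBIdx (ρ y), fun s hs => ?_⟩
    rw [rzF_all_notimp V M f _ y A [] A hstA hnotimp] at hs
    obtain ⟨K, hKeq, hKIdx, hφK⟩ := hKey (ρ y) s hs.1
    obtain ⟨v0, hv0eq, hv0⟩ := hs.2 (fun _ : Fin 1 => ρ y) (fun _ => hρ y) 0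
    have henv0 : updEnv ρ [y] (List.ofFn (fun _ : Fin 1 => ρ y)) = ρ := by
      rw [fin1_funext (fun _ : Fin 1 => ρ y) (Fin.cons (ρ y) (fun _ : Fin 0 => 0)) rfl,
        henv ρ y 0 (fun _ : Fin 0 => 0) []]
      rfl
    rw [henv0] at hv0
    have hKapp : V.φ 1 K (fun _ : Fin 1 => 0) = Part.some v0 :=
      (hφK (fun _ : Fin 1 => 0)).trans
        ((congrArg (V.φ _ s) (hvec2 (ρ y) (fun _ : Fin 1 => 0))).trans hv0eq)
    have hu : u (Fin.cons K (fun _ : Fin 1 => 0)) = Part.some v0 := by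
      rw [hOver K hKIdx (fun _ => 0) (by rw [hKapp]; trivial), hKapp]
    refine ⟨v0, ?_, ?_⟩
    · rw [hφWB (ρ y) s K ((hφW (ρ y) s).trans hKeq), hu]
    · exact (rzF_stable V M f A.size A le_rfl _ _ (by have := fml_size_pos A; omega)
        (by have := fml_size_pos A; omega) ρ v0).mp hv0

/-- axiom A11, instantiation: over an intuitionistic computability
model, for a formula `A(y,z₂,…,z_m)` with free variables among the distinct
variables `v 0 = y, v 1, …`, the axiom `∀y A(y,d₂,…,d_m) → A(d₁,…,d_m)` has an
`m`-ary realizing `V`-function, uniform in the parameters `d₁,…,d_m`. -/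
theorem stmt14 (V : Numbering) (hV : V.Intu) (m : ℕ) (hm : 0 < m)
    (v : Fin m → ℕ) (hinj : Function.Injective v) (A : Fml)
    (hfvA : ∀ x, FreeIn x A → ∃ i, v i = x) :
    ∃ ψ : PFn m, V.IsV m ψ ∧
      ∀ (M : Set ℕ), M.Nonempty → ∀ (f : Eval) (ρ : ℕ → ℕ), (∀ x, ρ x ∈ M) →
        ∃ w, ψ (fun i => ρ (v i)) = Part.some w ∧
          Rz V M f ((Fml.all (v ⟨0, hm⟩) A).imp A) ρ w :=
  stmt14' V hV m hm v hinj A hfvA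

end GenReal
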